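/- For m ≥ 0 and w ∈ 𝔥, the sum g_m(w) := Σ_{j=0}^{m} f_j(σ_{m-j}(w)) satisfies g_m(xw) = y g_{m-1}(xw) + x g_m(w) and g_m(yw) = y g_m(w) (with g_{-1} = 0). -/

import Mathlib

open scoped BigOperators

abbrev Ltr := Fin 2

/-- `𝔥 = ℚ⟨x,y⟩`, realized as the monoid algebra of the free monoid on two letters. -/
abbrev H := MonoidAlgebra ℚ (FreeMonoid Ltr)

/-- The word `u₁⋯u_m` as an element of `𝔥`. -/
noncomputable def wrd (l : List Ltr) : H := MonoidAlgebra.of ℚ (FreeMonoid Ltr) (FreeMonoid.ofList l)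

/-- The generator `x`. -/
noncomputable def Xh : H := wrd [0]
/-- The generator `y`. -/
noncomputable def Yh : H := wrd [1]

/-- `dn n w = yⁿ ⋄ w` where `⋄` is the bilinear map with `1⋄w = w⋄1 = w`,
`yw₁ ⋄ yw₂ = y(yw₁ ⋄ w₂) - y(w₁ ⋄ xw₂)` and `yw₁ ⋄ xw₂ = x(yw₁ ⋄ w₂) + y(w₁ ⋄ xw₂)`. -/
noncomputable def dn : ℕ → List Ltr → H
  | 0, u => wrd u
  | n + 1, [] => wrd (List.replicate (n + 1) 1)
  | n + 1, a :: u =>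
      if a = 0 then Xh * dn (n + 1) u + Yh * dn n (a :: u)
      else Yh * dn (n + 1) u - Yh * dn n ((0 : Ltr) :: u)
termination_by n u => (n, u.length)

/-- `dia n f = yⁿ ⋄ f`, extended linearly. -/
noncomputable def dia (n : ℕ) (f : H) : H := f.coeff.sum fun u c => c • dn n u.toList

/-- `f_n : 𝔥 → 𝔥` for `n ∈ ℤ`: `f_n = 0` for `n < 0`, `f₀ = id`, and
`f_n(w) = yⁿ ⋄ w - (y^{n-1} ⋄ w)y` for `n ≥ 1`. -/
noncomputable def fZ (n : ℤ) (f : H) : H :=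
  if n < 0 then 0 else if n = 0 then f else dia n.toNat f - dia (n.toNat - 1) f * Yh

abbrev PS := PowerSeries H

/-- The ring homomorphism `σ : 𝔥 → 𝔥[[T]]` with `σ(x) = x` and `σ(y) = y(1-xT)⁻¹`. -/
noncomputable def sigmaH : H →ₐ[ℚ] PS :=
  MonoidAlgebra.lift ℚ PS (FreeMonoid Ltr)
    (FreeMonoid.lift fun a =>
      if a = 0 then PowerSeries.C Xh else PowerSeries.mk fun n => Yh * Xh ^ n)

/-- `σ_m`, the coefficient of `T^m` in `σ`. -/
noncomputable def sigm (m : ℕ) (f : H) : H := PowerSeries.coeff m (sigmaH f)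

/-- The anti-automorphism `τ` with `τ(x) = y`, `τ(y) = x`. -/
noncomputable def tauH (f : H) : H :=
  MonoidAlgebra.ofCoeff (Finsupp.mapDomain
    (fun l => FreeMonoid.ofList
      (((FreeMonoid.toList l).reverse).map fun a => if a = 0 then (1 : Ltr) else 0)) f.coeff)

/-- `g_m(w) = Σ_{j=0}^{m} f_j(σ_{m-j}(w))` for `m ≥ 0`, and `g_m = 0` for `m < 0`. -/
noncomputable def gZ (m : ℤ) (w : H) : H :=
  if m < 0 then 0
  else ∑ j ∈ Finset.range (m.toNat + 1), fZ (j : ℤ) (sigm (m.toNat - j) w)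

/-!
Collect the `f_j` into the generating series `F(s) = Σ_j T^j f_j(s)` (with `f_j` acting on
coefficients), so that `Σ_m T^m g_m(w) = F(σ(w))`. The recursions of `⋄` give, for every
`j ∈ ℤ`, `f_j(xv) = x f_j(v) + y f_{j-1}(xv)` and `f_j(yv) = y f_j(v) - y f_{j-1}(xv)`, that is
`F(xs) = x F(s) + yT F(xs)` and `F(ys) = y F(s) - yT F(xs)`. The first identity, applied to
`s = σ(w)`, is the claim for `xw`. For `yw` write `σ(yw) = y h` with `h = (1 - xT)⁻¹ σ(w)`,
so that `h = σ(w) + xT h`; as `F` commutes with `T`,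
`F(yh) = y F(σ w) + y F(xTh) - yT F(xh) = y F(σ w)`.
-/

open PowerSeries

open Finset.HasAntidiagonal (antidiagonal)

lemma dia_zero_right (n : ℕ) : dia n 0 = 0 := Finsupp.sum_zero_index

lemma dia_add (n : ℕ) (f g : H) : dia n (f + g) = dia n f + dia n g :=
  Finsupp.sum_add_index' (by simp) (by intros; simp [add_smul])

lemma dia_single (n : ℕ) (u : List Ltr) (c : ℚ) :
    dia n (MonoidAlgebra.single (FreeMonoid.ofList u) c) = c • dn n u := by
  simp [dia, Finsupp.sum_single_index]

lemma dia_zero_left (f : H) : dia 0 f = f := by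
  have single_eq (u : FreeMonoid Ltr) (c : ℚ) :
      c • wrd u.toList = MonoidAlgebra.single u c := by
    simp [wrd, MonoidAlgebra.of_apply]
  simp only [dia, dn, single_eq]
  exact MonoidAlgebra.sum_coeff_single f

lemma wrd_mul_single (a : Ltr) (u : List Ltr) (c : ℚ) :
    wrd [a] * MonoidAlgebra.single (FreeMonoid.ofList u) c
      = MonoidAlgebra.single (FreeMonoid.ofList (a :: u)) c := by
  rw [show FreeMonoid.ofList (a :: u) = FreeMonoid.ofList [a] * FreeMonoid.ofList u from rfl]
  simp [wrd, MonoidAlgebra.of_apply, MonoidAlgebra.single_mul_single]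

lemma H_induction {p : H → Prop} (f : H) (zero : p 0) (add : ∀ f g, p f → p g → p (f + g))
    (single : ∀ (u : List Ltr) (c : ℚ), p (MonoidAlgebra.single (FreeMonoid.ofList u) c)) :
    p f :=
  MonoidAlgebra.induction_linear f zero add fun u c => by
    simpa using single (FreeMonoid.toList u) c

lemma dia_succ_Xh_mul (n : ℕ) (v : H) :
    dia (n + 1) (Xh * v) = Xh * dia (n + 1) v + Yh * dia n (Xh * v) := by
  induction v using H_induction with
  | zero => simp [dia_zero_right]
  | add f g hf hg => simp only [mul_add, dia_add, hf, hg]; abel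
  | single u c =>
    simp only [Xh, Yh, wrd_mul_single, dia_single, dn, ↓reduceIte, smul_add, mul_smul_comm]

lemma dia_succ_Yh_mul (n : ℕ) (v : H) :
    dia (n + 1) (Yh * v) = Yh * dia (n + 1) v - Yh * dia n (Xh * v) := by
  induction v using H_induction with
  | zero => simp [dia_zero_right]
  | add f g hf hg => simp only [mul_add, dia_add, hf, hg]; abel
  | single u c =>
    simp only [Xh, Yh, wrd_mul_single, dia_single, dn, show (1 : Ltr) ≠ 0 by decide, if_false,
      smul_sub, mul_smul_comm]

lemma fZ_of_neg {n : ℤ} (hn : n < 0) (f : H) : fZ n f = 0 := if_pos hn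

lemma fZ_zero_left (f : H) : fZ 0 f = f := by simp [fZ]

lemma fZ_natCast_succ (n : ℕ) (f : H) : fZ (n + 1) f = dia (n + 1) f - dia n f * Yh := by
  simp [fZ, show ¬ ((n : ℤ) + 1 < 0) by omega, show (n : ℤ) + 1 ≠ 0 by omega,
    show ((n : ℤ) + 1).toNat = n + 1 by omega]

lemma fZ_one (f : H) : fZ 1 f = dia 1 f - f * Yh := by
  simpa [dia_zero_left] using fZ_natCast_succ 0 f

lemma fZ_add (n : ℤ) (f g : H) : fZ n (f + g) = fZ n f + fZ n g := by
  unfold fZ; split_ifs <;> simp only [dia_add, add_mul, add_zero]; abel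

lemma fZ_zero_right (n : ℤ) : fZ n 0 = 0 := by
  simpa using fZ_add n 0 0

lemma Int.cases_neg_zero_one_add_two {p : ℤ → Prop} (j : ℤ) (neg : ∀ j < 0, p j) (zero : p 0)
    (one : p 1) (add_two : ∀ n : ℕ, p (n + 2)) : p j := by
  obtain hj | rfl | rfl | hj : j < 0 ∨ j = 0 ∨ j = 1 ∨ 2 ≤ j := by omega
  · exact neg j hj
  · exact zero
  · exact one
  · obtain ⟨n, rfl⟩ : ∃ n : ℕ, j = n + 2 := ⟨(j - 2).toNat, by omega⟩
    exact add_two n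

lemma fZ_Xh_mul (j : ℤ) (v : H) : fZ j (Xh * v) = Xh * fZ j v + Yh * fZ (j - 1) (Xh * v) := by
  induction j using Int.cases_neg_zero_one_add_two with
  | neg j hj => simp [fZ_of_neg hj, fZ_of_neg (show j - 1 < 0 by omega)]
  | zero => simp [fZ_zero_left, fZ_of_neg]
  | one =>
    simp only [fZ_one, sub_self, fZ_zero_left, dia_succ_Xh_mul, dia_zero_left]
    noncomm_ring
  | add_two n =>
    rw [show (n : ℤ) + 2 - 1 = n + 1 by ring,
      show (n : ℤ) + 2 = (n + 1 : ℕ) + 1 by push_cast; ring,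
      fZ_natCast_succ, fZ_natCast_succ, fZ_natCast_succ, dia_succ_Xh_mul, dia_succ_Xh_mul]
    noncomm_ring

lemma fZ_Yh_mul (j : ℤ) (v : H) : fZ j (Yh * v) = Yh * fZ j v - Yh * fZ (j - 1) (Xh * v) := by
  induction j using Int.cases_neg_zero_one_add_two with
  | neg j hj => simp [fZ_of_neg hj, fZ_of_neg (show j - 1 < 0 by omega)]
  | zero => simp [fZ_zero_left, fZ_of_neg]
  | one =>
    simp only [fZ_one, sub_self, fZ_zero_left, dia_succ_Yh_mul, dia_zero_left]
    noncomm_ring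
  | add_two n =>
    rw [show (n : ℤ) + 2 - 1 = n + 1 by ring,
      show (n : ℤ) + 2 = (n + 1 : ℕ) + 1 by push_cast; ring,
      fZ_natCast_succ, fZ_natCast_succ, fZ_natCast_succ, dia_succ_Yh_mul, dia_succ_Yh_mul,
      dia_succ_Xh_mul]
    noncomm_ring

/-- `fSeries s = Σ_j T^j f_j(s)`, the `f_j` acting on coefficients. -/
noncomputable def fSeries (s : PS) : PS :=
  mk fun m => ∑ p ∈ antidiagonal m, fZ p.1 (coeff p.2 s)

lemma coeff_fSeries (m : ℕ) (s : PS) :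
    coeff m (fSeries s) = ∑ p ∈ antidiagonal m, fZ p.1 (coeff p.2 s) :=
  coeff_mk _ _

lemma fSeries_add (s t : PS) : fSeries (s + t) = fSeries s + fSeries t := by
  ext m : 1
  simp [coeff_fSeries, fZ_add, Finset.sum_add_distrib]

lemma fSeries_X_mul (s : PS) : fSeries (X * s) = X * fSeries s := by
  ext (_ | m) : 1
  · simp [coeff_fSeries, fZ_zero_right]
  · rw [coeff_fSeries, Finset.Nat.sum_antidiagonal_succ', coeff_succ_X_mul, coeff_fSeries]
    simp [coeff_succ_X_mul, fZ_zero_right]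

lemma coeff_X_mul_fSeries (m : ℕ) (s : PS) :
    coeff m (X * fSeries s) = ∑ p ∈ antidiagonal m, fZ (p.1 - 1) (coeff p.2 s) := by
  cases m with
  | zero => simp [fZ_of_neg]
  | succ m =>
    rw [coeff_succ_X_mul, coeff_fSeries, Finset.Nat.sum_antidiagonal_succ]
    simp [fZ_of_neg]

lemma fSeries_C_Xh_mul (s : PS) :
    fSeries (C Xh * s) = C Xh * fSeries s + C Yh * (X * fSeries (C Xh * s)) := by
  ext m : 1
  simp only [coeff_fSeries, map_add, coeff_C_mul, coeff_X_mul_fSeries]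
  rw [Finset.sum_congr rfl fun p _ => fZ_Xh_mul p.1 (coeff p.2 s), Finset.sum_add_distrib,
    Finset.mul_sum, Finset.mul_sum]

lemma fSeries_C_Yh_mul (s : PS) :
    fSeries (C Yh * s) = C Yh * fSeries s - C Yh * (X * fSeries (C Xh * s)) := by
  ext m : 1
  simp only [coeff_fSeries, map_sub, coeff_C_mul, coeff_X_mul_fSeries]
  rw [Finset.sum_congr rfl fun p _ => fZ_Yh_mul p.1 (coeff p.2 s), Finset.sum_sub_distrib,
    Finset.mul_sum, Finset.mul_sum]

lemma fSeries_C_Yh_mul_of_eq {s h : PS} (hh : h = s + X * (C Xh * h)) :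
    fSeries (C Yh * h) = C Yh * fSeries s := by
  conv_lhs => rw [fSeries_C_Yh_mul, hh, fSeries_add, fSeries_X_mul, ← hh]
  noncomm_ring

lemma sigmaH_Xh : sigmaH Xh = C Xh := by
  simp [sigmaH, Xh, wrd, show FreeMonoid.ofList [(0 : Ltr)] = FreeMonoid.of 0 from rfl]

lemma sigmaH_Yh : sigmaH Yh = C Yh * mk fun n => Xh ^ n := by
  ext n : 1
  simp [sigmaH, Yh, wrd, show FreeMonoid.ofList [(1 : Ltr)] = FreeMonoid.of 1 from rfl, coeff_C_mul]

lemma sigmaH_Yh_mul (w : H) :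
    ∃ h : PS, sigmaH (Yh * w) = C Yh * h ∧ h = sigmaH w + X * (C Xh * h) := by
  set geom : PS := mk fun n => Xh ^ n
  have geom_eq : geom = 1 + X * (C Xh * geom) := by
    ext (_ | n) : 1
    · simp [geom]
    · simp [geom, coeff_succ_X_mul, coeff_C_mul, pow_succ']
  refine ⟨geom * sigmaH w, by rw [map_mul, sigmaH_Yh, mul_assoc], ?_⟩
  conv_lhs => rw [geom_eq]
  noncomm_ring

lemma gZ_natCast (n : ℕ) (w : H) : gZ n w = coeff n (fSeries (sigmaH w)) := by
  rw [coeff_fSeries, Finset.Nat.sum_antidiagonal_eq_sum_range_succ (fun j i => fZ j (coeff i _))]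
  simp [gZ, sigm]

lemma gZ_natCast_sub_one (n : ℕ) (w : H) : gZ (n - 1) w = coeff n (X * fSeries (sigmaH w)) := by
  cases n with
  | zero => simp [gZ]
  | succ n => simpa [coeff_succ_X_mul] using gZ_natCast n w

theorem stmt10_general (m : ℤ) (w : H) :
    gZ m (Xh * w) = Yh * gZ (m - 1) (Xh * w) + Xh * gZ m w ∧
    gZ m (Yh * w) = Yh * gZ m w := by
  obtain hm | hm := lt_or_ge m 0
  · simp [gZ, hm, show m - 1 < 0 by omega]
  lift m to ℕ using hm
  refine ⟨?_, ?_⟩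
  · have hx := congrArg (coeff m) (fSeries_C_Xh_mul (sigmaH w))
    rw [map_add, coeff_C_mul, coeff_C_mul, add_comm] at hx
    rwa [gZ_natCast, gZ_natCast_sub_one, gZ_natCast, map_mul, sigmaH_Xh]
  · obtain ⟨h, hσ, hh⟩ := sigmaH_Yh_mul w
    rw [gZ_natCast, gZ_natCast, hσ, fSeries_C_Yh_mul_of_eq hh, coeff_C_mul]

/-- For `m ≥ 0` and `w ∈ 𝔥`:
`g_m(xw) = y g_{m-1}(xw) + x g_m(w)` and `g_m(yw) = y g_m(w)` (with `g_{-1} = 0`). -/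
theorem stmt10 (m : ℤ) (hm : 0 ≤ m) (w : H) :
    gZ m (Xh * w) = Yh * gZ (m - 1) (Xh * w) + Xh * gZ m w ∧
    gZ m (Yh * w) = Yh * gZ m w :=
  stmt10_general m w
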